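/- arXiv:2404.19537 — 3 statements merged into one kernel-verified Lean document; each statement's English description precedes it below -/
import Mathlib

section
/- Let G₁ be r₁-regular with r₁ ≥ 2 and adjacency eigenvalue λ ≠ r₁ with eigenvector X, and let G₂ be regular. Then −2(1+λ) + √(4(1+λ)² + 9(λ+r₁)) and −2(1+λ) − √(4(1+λ)² + 9(λ+r₁)) are eigenvalues of ε(G₁ ⊻ G₂). -/
open SimpleGraph Matrix Finset

attribute [local instance] Fintype.ofFinite Classical.propDecidable

noncomputable section

/-- Eccentricity of a vertex: maximum distance to any vertex. -/
def ecc {V : Type*} [Fintype V] (G : SimpleGraph V) (v : V) : ℕ :=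
  Finset.univ.sup (fun w => G.dist v w)

/-- Diameter: maximum eccentricity. -/
def gdiam {V : Type*} [Fintype V] (G : SimpleGraph V) : ℕ :=
  Finset.univ.sup (fun v => ecc G v)

/-- The eccentricity matrix. -/
def eccMatrix {V : Type*} [Fintype V] (G : SimpleGraph V) : Matrix V V ℝ :=
  fun u v => if G.dist u v = min (ecc G u) (ecc G v) then (G.dist u v : ℝ) else 0

/-- Join of two graphs. -/
def joinGraph {V₁ V₂ : Type*} (G₁ : SimpleGraph V₁) (G₂ : SimpleGraph V₂) :
    SimpleGraph (V₁ ⊕ V₂) :=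
  SimpleGraph.fromRel (fun x y =>
    match x, y with
    | Sum.inl a, Sum.inl b => G₁.Adj a b
    | Sum.inr a, Sum.inr b => G₂.Adj a b
    | Sum.inl _, Sum.inr _ => True
    | Sum.inr _, Sum.inl _ => False)

/-- Disjoint union of two graphs. -/
def disjUnion {V₁ V₂ : Type*} (G₁ : SimpleGraph V₁) (G₂ : SimpleGraph V₂) :
    SimpleGraph (V₁ ⊕ V₂) :=
  SimpleGraph.fromRel (fun x y =>
    match x, y with
    | Sum.inl a, Sum.inl b => G₁.Adj a b
    | Sum.inr a, Sum.inr b => G₂.Adj a b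
    | _, _ => False)

/-- Subdivision-vertex join `G₁ ∨̇ G₂`: take the subdivision of `G₁` (original vertices
`V₁`, one new vertex for every edge) and join every original vertex of `G₁` to every
vertex of `G₂`. -/
def subVertexJoin {V₁ V₂ : Type*} (G₁ : SimpleGraph V₁) (G₂ : SimpleGraph V₂) :
    SimpleGraph ((V₁ ⊕ G₁.edgeSet) ⊕ V₂) :=
  SimpleGraph.fromRel (fun x y =>
    match x, y with
    | Sum.inl (Sum.inl v), Sum.inl (Sum.inr e) => v ∈ (e : Sym2 V₁)
    | Sum.inl (Sum.inl _), Sum.inr _ => True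
    | Sum.inr a, Sum.inr b => G₂.Adj a b
    | _, _ => False)

/-- Subdivision-edge join `G₁ ⊻ G₂`: take the subdivision of `G₁` and join every
subdivision (inserted) vertex of `G₁` to every vertex of `G₂`. -/
def subEdgeJoin {V₁ V₂ : Type*} (G₁ : SimpleGraph V₁) (G₂ : SimpleGraph V₂) :
    SimpleGraph ((V₁ ⊕ G₁.edgeSet) ⊕ V₂) :=
  SimpleGraph.fromRel (fun x y =>
    match x, y with
    | Sum.inl (Sum.inl v), Sum.inl (Sum.inr e) => v ∈ (e : Sym2 V₁)
    | Sum.inl (Sum.inr _), Sum.inr _ => True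
    | Sum.inr a, Sum.inr b => G₂.Adj a b
    | _, _ => False)

/-- Line graph: vertices are edges of `G`, adjacent iff they share an endpoint. -/
def lineG {V : Type*} (G : SimpleGraph V) : SimpleGraph G.edgeSet :=
  SimpleGraph.fromRel (fun e f => ∃ v, v ∈ (e : Sym2 V) ∧ v ∈ (f : Sym2 V))

/-- Incidence matrix of a graph. -/
def incMat {V : Type*} [Fintype V] (G : SimpleGraph V) : Matrix V G.edgeSet ℝ :=
  fun v e => if v ∈ (e : Sym2 V) then 1 else 0

/-- All-ones matrix. -/
def Jmat (m n : Type*) : Matrix m n ℝ := Matrix.of (fun _ _ => (1 : ℝ))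

/-- A symmetric matrix is irreducible iff it is not permutation-similar to a
nontrivial block upper-triangular matrix, i.e. there is no nontrivial vertex split
with all cross entries zero. -/
def MatIrreducible {n : Type*} (M : Matrix n n ℝ) : Prop :=
  ∀ S : Set n, S.Nonempty → Sᶜ.Nonempty → ∃ u ∈ S, ∃ v ∈ Sᶜ, M u v ≠ 0

/-- `μ` is an eigenvalue of `M`. -/
def IsEigenvalue {n : Type*} [Fintype n] (M : Matrix n n ℝ) (μ : ℝ) : Prop :=
  ∃ v : n → ℝ, v ≠ 0 ∧ M.mulVec v = μ • v

/-- Eigenspace of `M` for `μ`. -/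
def eigSpace {n : Type*} [Fintype n] (M : Matrix n n ℝ) (μ : ℝ) :
    Submodule ℝ (n → ℝ) :=
  LinearMap.ker (M.mulVecLin - μ • LinearMap.id)

/-- Eccentricity energy: sum of absolute values of the eccentricity eigenvalues. -/
def eccEnergy {V : Type*} [Fintype V] (G : SimpleGraph V) : ℝ :=
  ((eccMatrix G).charpoly.roots.map (fun x => |x|)).sum

/-- Eccentricity Wiener index: half the sum of the entries of the eccentricity matrix. -/
def eccWiener {V : Type*} [Fintype V] (G : SimpleGraph V) : ℝ :=
  (∑ u, ∑ v, eccMatrix G u v) / 2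

end


noncomputable section AuxLemmas

variable {V₁ V₂ : Type*} (G₁ : SimpleGraph V₁) (G₂ : SimpleGraph V₂)

lemma adj_vv (v v' : V₁) : ¬ (subEdgeJoin G₁ G₂).Adj (.inl (.inl v)) (.inl (.inl v')) := by
  simp [subEdgeJoin, SimpleGraph.fromRel_adj]

lemma adj_ve (v : V₁) (e : G₁.edgeSet) :
    (subEdgeJoin G₁ G₂).Adj (.inl (.inl v)) (.inl (.inr e)) ↔ v ∈ (e : Sym2 V₁) := by
  simp [subEdgeJoin, SimpleGraph.fromRel_adj]

lemma adj_ee (e f : G₁.edgeSet) :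
    ¬ (subEdgeJoin G₁ G₂).Adj (.inl (.inr e)) (.inl (.inr f)) := by
  simp [subEdgeJoin, SimpleGraph.fromRel_adj]

lemma adj_ew (e : G₁.edgeSet) (w : V₂) :
    (subEdgeJoin G₁ G₂).Adj (.inl (.inr e)) (.inr w) := by
  simp [subEdgeJoin, SimpleGraph.fromRel_adj]

lemma adj_vw (v : V₁) (w : V₂) :
    ¬ (subEdgeJoin G₁ G₂).Adj (.inl (.inl v)) (.inr w) := by
  simp [subEdgeJoin, SimpleGraph.fromRel_adj]

lemma adj_ww (w w' : V₂) :
    (subEdgeJoin G₁ G₂).Adj (.inr w) (.inr w') ↔ G₂.Adj w w' := by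
  simp only [subEdgeJoin, SimpleGraph.fromRel_adj]
  constructor
  · rintro ⟨-, h | h⟩
    · exact h
    · exact h.symm
  · intro h; exact ⟨by simpa using h.ne, Or.inl h⟩

lemma nb_v {v : V₁} {y} (h : (subEdgeJoin G₁ G₂).Adj (.inl (.inl v)) y) :
    ∃ e : G₁.edgeSet, y = .inl (.inr e) ∧ v ∈ (e : Sym2 V₁) := by
  rcases y with (y | e) | w
  · exact absurd h (adj_vv G₁ G₂ v y)
  · exact ⟨e, rfl, (adj_ve G₁ G₂ v e).mp h⟩
  · exact absurd h (adj_vw G₁ G₂ v w)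

lemma dist_eq_two' {V : Type*} {G : SimpleGraph V} {x y : V} (p : G.Walk x y)
    (hp : p.length = 2) (hne : x ≠ y) (hnadj : ¬ G.Adj x y) : G.dist x y = 2 := by
  have h1 : G.dist x y ≤ 2 := hp ▸ SimpleGraph.dist_le p
  have h0 : G.dist x y ≠ 0 := by
    intro h; exact hne ((SimpleGraph.Reachable.dist_eq_zero_iff ⟨p⟩).mp h)
  have hone : G.dist x y ≠ 1 := fun h => hnadj (SimpleGraph.dist_eq_one_iff_adj.mp h)
  omega

lemma dist_ne_two {V : Type*} {G : SimpleGraph V} {x y : V}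
    (hcn : ∀ z, G.Adj x z → ¬ G.Adj z y) : G.dist x y ≠ 2 := by
  intro h
  have hr : G.Reachable x y := SimpleGraph.Reachable.of_dist_ne_zero (by omega)
  obtain ⟨q, hq⟩ := hr.exists_walk_length_eq_dist
  rw [h] at hq
  cases q with
  | nil => simp at hq
  | cons h' q' =>
    have hq' : q'.length = 1 := by
      simp only [SimpleGraph.Walk.length_cons] at hq; omega
    exact hcn _ h' (SimpleGraph.Walk.adj_of_length_eq_one hq')

lemma dist_ne_three {V : Type*} {G : SimpleGraph V} {x y : V}
    (h3 : ∀ a b, G.Adj x a → G.Adj a b → ¬ G.Adj b y) : G.dist x y ≠ 3 := by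
  intro h
  have hr : G.Reachable x y := SimpleGraph.Reachable.of_dist_ne_zero (by omega)
  obtain ⟨q, hq⟩ := hr.exists_walk_length_eq_dist
  rw [h] at hq
  cases q with
  | nil => simp at hq
  | cons h1 q' =>
    cases q' with
    | nil => simp at hq
    | cons h2 q'' =>
      have hq' : q''.length = 1 := by
        simp only [SimpleGraph.Walk.length_cons] at hq; omega
      exact h3 _ _ h1 h2 (SimpleGraph.Walk.adj_of_length_eq_one hq')

lemma dist_eq_three' {V : Type*} {G : SimpleGraph V} {x y : V} (p : G.Walk x y)
    (hp : p.length = 3) (hne : x ≠ y) (hnadj : ¬ G.Adj x y)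
    (hcn : ∀ z, G.Adj x z → ¬ G.Adj z y) : G.dist x y = 3 := by
  have h1 : G.dist x y ≤ 3 := hp ▸ SimpleGraph.dist_le p
  have h0 : G.dist x y ≠ 0 := by
    intro h; exact hne ((SimpleGraph.Reachable.dist_eq_zero_iff ⟨p⟩).mp h)
  have hone : G.dist x y ≠ 1 := fun h => hnadj (SimpleGraph.dist_eq_one_iff_adj.mp h)
  have h2 := dist_ne_two hcn
  omega

lemma dist_eq_four' {V : Type*} {G : SimpleGraph V} {x y : V} (p : G.Walk x y)
    (hp : p.length = 4) (hne : x ≠ y) (hnadj : ¬ G.Adj x y)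
    (hcn : ∀ z, G.Adj x z → ¬ G.Adj z y)
    (h3 : ∀ a b, G.Adj x a → G.Adj a b → ¬ G.Adj b y) : G.dist x y = 4 := by
  have h1 : G.dist x y ≤ 4 := hp ▸ SimpleGraph.dist_le p
  have h0 : G.dist x y ≠ 0 := by
    intro h; exact hne ((SimpleGraph.Reachable.dist_eq_zero_iff ⟨p⟩).mp h)
  have hone : G.dist x y ≠ 1 := fun h => hnadj (SimpleGraph.dist_eq_one_iff_adj.mp h)
  have h2 := dist_ne_two hcn
  have h3' := dist_ne_three h3
  omega

section Dists
variable {G₁ G₂}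

lemma dist_ew (e : G₁.edgeSet) (w : V₂) :
    (subEdgeJoin G₁ G₂).dist (.inl (.inr e)) (.inr w) = 1 :=
  SimpleGraph.dist_eq_one_iff_adj.mpr (adj_ew G₁ G₂ e w)

lemma dist_vw (v : V₁) (w : V₂) {e : G₁.edgeSet} (he : v ∈ (e : Sym2 V₁)) :
    (subEdgeJoin G₁ G₂).dist (.inl (.inl v)) (.inr w) = 2 := by
  refine dist_eq_two' (SimpleGraph.Walk.cons ((adj_ve G₁ G₂ v e).mpr he)
    (SimpleGraph.Walk.cons (adj_ew G₁ G₂ e w) SimpleGraph.Walk.nil)) (by simp) (by simp)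
    (adj_vw G₁ G₂ v w)

lemma dist_ee {e f : G₁.edgeSet} (hef : e ≠ f) (w₀ : V₂) :
    (subEdgeJoin G₁ G₂).dist (.inl (.inr e)) (.inl (.inr f)) = 2 := by
  refine dist_eq_two' (SimpleGraph.Walk.cons (adj_ew G₁ G₂ e w₀)
    (SimpleGraph.Walk.cons (adj_ew G₁ G₂ f w₀).symm SimpleGraph.Walk.nil)) (by simp)
    (by simp [hef]) (adj_ee G₁ G₂ e f)

lemma dist_ww_adj {w w' : V₂} (h : G₂.Adj w w') :
    (subEdgeJoin G₁ G₂).dist (.inr w) (.inr w') = 1 :=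
  SimpleGraph.dist_eq_one_iff_adj.mpr ((adj_ww G₁ G₂ w w').mpr h)

lemma dist_ww {w w' : V₂} (hne : w ≠ w') (hnadj : ¬ G₂.Adj w w') (e₀ : G₁.edgeSet) :
    (subEdgeJoin G₁ G₂).dist (.inr w) (.inr w') = 2 := by
  refine dist_eq_two' (SimpleGraph.Walk.cons (adj_ew G₁ G₂ e₀ w).symm
    (SimpleGraph.Walk.cons (adj_ew G₁ G₂ e₀ w') SimpleGraph.Walk.nil)) (by simp)
    (by simp [hne]) (fun h => hnadj ((adj_ww G₁ G₂ w w').mp h))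

lemma dist_ve {v : V₁} {e : G₁.edgeSet} (hv : v ∈ (e : Sym2 V₁)) :
    (subEdgeJoin G₁ G₂).dist (.inl (.inl v)) (.inl (.inr e)) = 1 :=
  SimpleGraph.dist_eq_one_iff_adj.mpr ((adj_ve G₁ G₂ v e).mpr hv)

lemma dist_ve' {v : V₁} {e : G₁.edgeSet} (hv : v ∉ (e : Sym2 V₁))
    {e₁ : G₁.edgeSet} (he₁ : v ∈ (e₁ : Sym2 V₁)) (w₀ : V₂) :
    (subEdgeJoin G₁ G₂).dist (.inl (.inl v)) (.inl (.inr e)) = 3 := by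
  refine dist_eq_three' (SimpleGraph.Walk.cons ((adj_ve G₁ G₂ v e₁).mpr he₁)
    (SimpleGraph.Walk.cons (adj_ew G₁ G₂ e₁ w₀)
      (SimpleGraph.Walk.cons (adj_ew G₁ G₂ e w₀).symm SimpleGraph.Walk.nil)))
    (by simp) (by simp) (fun h => hv ((adj_ve G₁ G₂ v e).mp h)) ?_
  intro z h1 h2
  obtain ⟨f, rfl, -⟩ := nb_v G₁ G₂ h1
  exact adj_ee G₁ G₂ f e h2

lemma dist_vv_adj {v v' : V₁} (hadj : G₁.Adj v v') :
    (subEdgeJoin G₁ G₂).dist (.inl (.inl v)) (.inl (.inl v')) = 2 := by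
  refine dist_eq_two' (SimpleGraph.Walk.cons
    ((adj_ve G₁ G₂ v ⟨s(v, v'), hadj⟩).mpr (by simp))
    (SimpleGraph.Walk.cons ((adj_ve G₁ G₂ v' ⟨s(v, v'), hadj⟩).mpr (by simp)).symm
      SimpleGraph.Walk.nil)) (by simp) (by simp [hadj.ne]) (adj_vv G₁ G₂ v v')

lemma dist_vv {v v' : V₁} (hne : v ≠ v') (hnadj : ¬ G₁.Adj v v')
    {e₁ e₂ : G₁.edgeSet} (he₁ : v ∈ (e₁ : Sym2 V₁)) (he₂ : v' ∈ (e₂ : Sym2 V₁))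
    (w₀ : V₂) :
    (subEdgeJoin G₁ G₂).dist (.inl (.inl v)) (.inl (.inl v')) = 4 := by
  refine dist_eq_four' (SimpleGraph.Walk.cons ((adj_ve G₁ G₂ v e₁).mpr he₁)
    (SimpleGraph.Walk.cons (adj_ew G₁ G₂ e₁ w₀)
      (SimpleGraph.Walk.cons (adj_ew G₁ G₂ e₂ w₀).symm
        (SimpleGraph.Walk.cons ((adj_ve G₁ G₂ v' e₂).mpr he₂).symm SimpleGraph.Walk.nil))))
    (by simp) (by simp [hne]) (adj_vv G₁ G₂ v v') ?_ ?_
  · intro z h1 h2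
    obtain ⟨f, rfl, hvf⟩ := nb_v G₁ G₂ h1
    obtain ⟨g, hg, hv'g⟩ := nb_v G₁ G₂ h2.symm
    rw [Sum.inl.injEq, Sum.inr.injEq] at hg
    subst hg
    have : (f : Sym2 V₁) = s(v, v') := (Sym2.mem_and_mem_iff hne).mp ⟨hvf, hv'g⟩
    exact hnadj (G₁.mem_edgeSet.mp (this ▸ f.2))
  · intro a b h1 h2 h3
    obtain ⟨f, rfl, -⟩ := nb_v G₁ G₂ h1
    obtain ⟨g, rfl, -⟩ := nb_v G₁ G₂ h3.symm
    exact adj_ee G₁ G₂ f g h2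

end Dists

section Ecc
variable {G₁ G₂} [Fintype V₁] [Fintype V₂]

lemma ecc_v_le (hinc : ∀ v : V₁, ∃ e : G₁.edgeSet, v ∈ (e : Sym2 V₁)) (w₀ : V₂)
    (v : V₁) : ecc (subEdgeJoin G₁ G₂) (.inl (.inl v)) ≤ 4 := by
  apply Finset.sup_le
  rintro ((v' | e) | w) -
  · by_cases h : v = v'
    · subst h; simp [SimpleGraph.dist_self]
    · by_cases ha : G₁.Adj v v'
      · rw [dist_vv_adj ha]; omega
      · obtain ⟨e₁, he₁⟩ := hinc v
        obtain ⟨e₂, he₂⟩ := hinc v'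
        rw [dist_vv h ha he₁ he₂ w₀]
  · by_cases h : v ∈ (e : Sym2 V₁)
    · rw [dist_ve h]; omega
    · obtain ⟨e₁, he₁⟩ := hinc v
      rw [dist_ve' h he₁ w₀]; omega
  · obtain ⟨e₁, he₁⟩ := hinc v
    rw [dist_vw v w he₁]; omega

lemma ecc_v_ge (hinc : ∀ v : V₁, ∃ e : G₁.edgeSet, v ∈ (e : Sym2 V₁)) (w₀ : V₂)
    {v : V₁} {e : G₁.edgeSet} (hv : v ∉ (e : Sym2 V₁)) :
    3 ≤ ecc (subEdgeJoin G₁ G₂) (.inl (.inl v)) := by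
  obtain ⟨e₁, he₁⟩ := hinc v
  have := Finset.le_sup (f := fun x => (subEdgeJoin G₁ G₂).dist (.inl (.inl v)) x)
    (Finset.mem_univ (Sum.inl (Sum.inr e)))
  rw [dist_ve' hv he₁ w₀] at this
  exact this

lemma ecc_v_eq4 (hinc : ∀ v : V₁, ∃ e : G₁.edgeSet, v ∈ (e : Sym2 V₁)) (w₀ : V₂)
    {v v' : V₁} (hne : v ≠ v') (hnadj : ¬ G₁.Adj v v') :
    ecc (subEdgeJoin G₁ G₂) (.inl (.inl v)) = 4 := by
  refine le_antisymm (ecc_v_le hinc w₀ v) ?_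
  obtain ⟨e₁, he₁⟩ := hinc v
  obtain ⟨e₂, he₂⟩ := hinc v'
  have := Finset.le_sup (f := fun x => (subEdgeJoin G₁ G₂).dist (.inl (.inl v)) x)
    (Finset.mem_univ (Sum.inl (Sum.inl v')))
  rw [dist_vv hne hnadj he₁ he₂ w₀] at this
  exact this

lemma ecc_e (hinc : ∀ v : V₁, ∃ e : G₁.edgeSet, v ∈ (e : Sym2 V₁)) (w₀ : V₂)
    {e : G₁.edgeSet} {v₀ : V₁} (hv₀ : v₀ ∉ (e : Sym2 V₁)) :
    ecc (subEdgeJoin G₁ G₂) (.inl (.inr e)) = 3 := by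
  refine le_antisymm ?_ ?_
  · apply Finset.sup_le
    rintro ((v' | f) | w) -
    · rw [SimpleGraph.dist_comm]
      by_cases h : v' ∈ (e : Sym2 V₁)
      · rw [dist_ve h]; omega
      · obtain ⟨e₁, he₁⟩ := hinc v'
        rw [dist_ve' h he₁ w₀]
    · by_cases h : e = f
      · subst h; simp [SimpleGraph.dist_self]
      · rw [dist_ee h w₀]; omega
    · rw [dist_ew]; omega
  · obtain ⟨e₁, he₁⟩ := hinc v₀
    have := Finset.le_sup (f := fun x => (subEdgeJoin G₁ G₂).dist (.inl (.inr e)) x)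
      (Finset.mem_univ (Sum.inl (Sum.inl v₀)))
    rw [SimpleGraph.dist_comm, dist_ve' hv₀ he₁ w₀] at this
    exact this

lemma ecc_w (hinc : ∀ v : V₁, ∃ e : G₁.edgeSet, v ∈ (e : Sym2 V₁)) (v₀ : V₁)
    (w : V₂) : ecc (subEdgeJoin G₁ G₂) (.inr w) = 2 := by
  refine le_antisymm ?_ ?_
  · apply Finset.sup_le
    rintro ((v' | f) | w') -
    · obtain ⟨e₁, he₁⟩ := hinc v'
      rw [SimpleGraph.dist_comm, dist_vw v' w he₁]
    · rw [SimpleGraph.dist_comm, dist_ew]; omega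
    · by_cases h : w = w'
      · subst h; simp [SimpleGraph.dist_self]
      · by_cases ha : G₂.Adj w w'
        · rw [dist_ww_adj ha]; omega
        · obtain ⟨e₁, he₁⟩ := hinc v₀
          rw [dist_ww h ha e₁]
  · obtain ⟨e₁, he₁⟩ := hinc v₀
    have := Finset.le_sup (f := fun x => (subEdgeJoin G₁ G₂).dist (.inr w) x)
      (Finset.mem_univ (Sum.inl (Sum.inl v₀)))
    rw [SimpleGraph.dist_comm, dist_vw v₀ w he₁] at this
    exact this

end Ecc


set_option linter.unusedSectionVars false
section Entries
variable {G₁ G₂} [Fintype V₁] [Fintype V₂]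
variable (hinc : ∀ v : V₁, ∃ e : G₁.edgeSet, v ∈ (e : Sym2 V₁))
  (hmiss : ∀ e : G₁.edgeSet, ∃ v : V₁, v ∉ (e : Sym2 V₁))
  (hmiss' : ∀ v : V₁, ∃ e : G₁.edgeSet, v ∉ (e : Sym2 V₁))
  (w₀ : V₂) (v₀ : V₁)


lemma eccM_symm {V : Type*} [Fintype V] (G : SimpleGraph V) (u v : V) :
    eccMatrix G u v = eccMatrix G v u := by
  unfold eccMatrix
  rw [SimpleGraph.dist_comm, min_comm]

include hinc hmiss hmiss' w₀ v₀ in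
lemma eM_vv (v v' : V₁) :
    eccMatrix (subEdgeJoin G₁ G₂) (.inl (.inl v)) (.inl (.inl v')) =
      if v ≠ v' ∧ ¬ G₁.Adj v v' then 4 else 0 := by
  unfold eccMatrix
  by_cases h : v ≠ v' ∧ ¬ G₁.Adj v v'
  · obtain ⟨e₁, he₁⟩ := hinc v
    obtain ⟨e₂, he₂⟩ := hinc v'
    rw [if_pos h, dist_vv h.1 h.2 he₁ he₂ w₀, ecc_v_eq4 hinc w₀ h.1 h.2,
      ecc_v_eq4 hinc w₀ (Ne.symm h.1) (fun ha => h.2 ha.symm)]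
    norm_num
  · rw [if_neg h]
    obtain ⟨e, he⟩ := hmiss' v
    have h3 : 3 ≤ ecc (subEdgeJoin G₁ G₂) (Sum.inl (Sum.inl v)) := ecc_v_ge hinc w₀ he
    obtain ⟨e', he'⟩ := hmiss' v'
    have h3' : 3 ≤ ecc (subEdgeJoin G₁ G₂) (Sum.inl (Sum.inl v')) := ecc_v_ge hinc w₀ he'
    push_neg at h
    by_cases hvv : v = v'
    · subst hvv
      rw [SimpleGraph.dist_self, if_neg (by omega)]
    · rw [dist_vv_adj (h hvv), if_neg (by omega)]

include hinc hmiss hmiss' w₀ v₀ in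
lemma eM_ve (v : V₁) (e : G₁.edgeSet) :
    eccMatrix (subEdgeJoin G₁ G₂) (.inl (.inl v)) (.inl (.inr e)) =
      if v ∈ (e : Sym2 V₁) then 0 else 3 := by
  unfold eccMatrix
  obtain ⟨u, hu⟩ := hmiss e
  obtain ⟨f, hf⟩ := hmiss' v
  have h3 : 3 ≤ ecc (subEdgeJoin G₁ G₂) (Sum.inl (Sum.inl v)) := ecc_v_ge hinc w₀ hf
  have hee : ecc (subEdgeJoin G₁ G₂) (Sum.inl (Sum.inr e)) = 3 := ecc_e hinc w₀ hu
  by_cases h : v ∈ (e : Sym2 V₁)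
  · rw [if_pos h, dist_ve h, if_neg (by omega)]
  · obtain ⟨e₁, he₁⟩ := hinc v
    rw [if_neg h, dist_ve' h he₁ w₀, hee, if_pos (by omega)]
    norm_num

include hinc hmiss hmiss' w₀ v₀ in
lemma eM_vw (v : V₁) (w : V₂) :
    eccMatrix (subEdgeJoin G₁ G₂) (.inl (.inl v)) (.inr w) = 2 := by
  unfold eccMatrix
  obtain ⟨f, hf⟩ := hmiss' v
  have h3 : 3 ≤ ecc (subEdgeJoin G₁ G₂) (Sum.inl (Sum.inl v)) := ecc_v_ge hinc w₀ hf
  have hw : ecc (subEdgeJoin G₁ G₂) (Sum.inr w) = 2 := ecc_w hinc v w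
  obtain ⟨e₁, he₁⟩ := hinc v
  rw [dist_vw v w he₁, hw, if_pos (by omega)]
  norm_num

include hinc hmiss hmiss' w₀ v₀ in
lemma eM_ee (e f : G₁.edgeSet) :
    eccMatrix (subEdgeJoin G₁ G₂) (.inl (.inr e)) (.inl (.inr f)) = 0 := by
  unfold eccMatrix
  obtain ⟨u, hu⟩ := hmiss e
  have hee : ecc (subEdgeJoin G₁ G₂) (Sum.inl (Sum.inr e)) = 3 := ecc_e hinc w₀ hu
  obtain ⟨u', hu'⟩ := hmiss f
  have hff : ecc (subEdgeJoin G₁ G₂) (Sum.inl (Sum.inr f)) = 3 := ecc_e hinc w₀ hu'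
  by_cases h : e = f
  · subst h
    rw [SimpleGraph.dist_self, if_neg (by omega)]
  · rw [dist_ee h w₀, hee, hff, if_neg (by omega)]

include hinc hmiss hmiss' w₀ v₀ in
lemma eM_ew (e : G₁.edgeSet) (w : V₂) :
    eccMatrix (subEdgeJoin G₁ G₂) (.inl (.inr e)) (.inr w) = 0 := by
  unfold eccMatrix
  obtain ⟨u, hu⟩ := hmiss e
  have hee : ecc (subEdgeJoin G₁ G₂) (Sum.inl (Sum.inr e)) = 3 := ecc_e hinc w₀ hu
  have hw : ecc (subEdgeJoin G₁ G₂) (Sum.inr w) = 2 := ecc_w hinc v₀ w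
  rw [dist_ew, if_neg (by omega)]

include hinc hmiss hmiss' w₀ v₀ in
lemma eM_ww (w w' : V₂) :
    eccMatrix (subEdgeJoin G₁ G₂) (.inr w) (.inr w') =
      if w ≠ w' ∧ ¬ G₂.Adj w w' then 2 else 0 := by
  unfold eccMatrix
  have hw : ecc (subEdgeJoin G₁ G₂) (Sum.inr w) = 2 := ecc_w hinc v₀ w
  have hw' : ecc (subEdgeJoin G₁ G₂) (Sum.inr w') = 2 := ecc_w hinc v₀ w'
  by_cases h : w ≠ w' ∧ ¬ G₂.Adj w w'
  · obtain ⟨e₁, he₁⟩ := hinc v₀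
    rw [if_pos h, dist_ww h.1 h.2 e₁, hw, hw', if_pos (by omega)]
    norm_num
  · rw [if_neg h]
    push_neg at h
    by_cases hww : w = w'
    · subst hww
      rw [SimpleGraph.dist_self, if_neg (by omega)]
    · rw [dist_ww_adj (h hww), if_neg (by omega)]

include hinc hmiss hmiss' w₀ v₀ in
lemma eM_ev (v : V₁) (e : G₁.edgeSet) :
    eccMatrix (subEdgeJoin G₁ G₂) (.inl (.inr e)) (.inl (.inl v)) =
      if v ∈ (e : Sym2 V₁) then 0 else 3 := by
  rw [eccM_symm]; exact eM_ve hinc hmiss hmiss' w₀ v₀ v e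

include hinc hmiss hmiss' w₀ v₀ in
lemma eM_wv (v : V₁) (w : V₂) :
    eccMatrix (subEdgeJoin G₁ G₂) (.inr w) (.inl (.inl v)) = 2 := by
  rw [eccM_symm]; exact eM_vw hinc hmiss hmiss' w₀ v₀ v w

include hinc hmiss hmiss' w₀ v₀ in
lemma eM_we (e : G₁.edgeSet) (w : V₂) :
    eccMatrix (subEdgeJoin G₁ G₂) (.inr w) (.inl (.inr e)) = 0 := by
  rw [eccM_symm]; exact eM_ew hinc hmiss hmiss' w₀ v₀ e w

end Entries


end AuxLemmas

/-- For `r₁`-regular `G₁` (`r₁ ≥ 2`) with adjacency eigenvalue `λ ≠ r₁`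
(eigenvector `X`) and regular `G₂`, both `-2(1+λ) ± √(4(1+λ)² + 9(λ+r₁))` are
eigenvalues of `ε(G₁ ⊻ G₂)`. -/
theorem stmt10 {V₁ V₂ : Type*} [Fintype V₁] [Fintype V₂]
    (G₁ : SimpleGraph V₁) (G₂ : SimpleGraph V₂) (r₁ r₂ : ℕ) (lam : ℝ)
    (h₁ : G₁.Connected) (h₂ : G₂.Connected)
    (hr₁ : G₁.IsRegularOfDegree r₁) (hr₁2 : 2 ≤ r₁)
    (hr₂ : G₂.IsRegularOfDegree r₂)
    (X : V₁ → ℝ) (hX : X ≠ 0) (hev : (G₁.adjMatrix ℝ).mulVec X = lam • X)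
    (hlam : lam ≠ (r₁ : ℝ)) :
    IsEigenvalue (eccMatrix (subEdgeJoin G₁ G₂))
        (-2 * (1 + lam) + Real.sqrt (4 * (1 + lam) ^ 2 + 9 * (lam + r₁))) ∧
      IsEigenvalue (eccMatrix (subEdgeJoin G₁ G₂))
        (-2 * (1 + lam) - Real.sqrt (4 * (1 + lam) ^ 2 + 9 * (lam + r₁))) := by
  classical
  obtain ⟨w₀⟩ : Nonempty V₂ := h₂.nonempty
  have hV₁ : Nonempty V₁ := by
    by_contra h
    exact hX (funext fun v => absurd ⟨v⟩ h)
  obtain ⟨v₀⟩ := hV₁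
  have hnbr : ∀ v : V₁, ∃ u, G₁.Adj v u := by
    intro v
    have hd : (G₁.neighborFinset v).Nonempty := by
      rw [← Finset.card_pos, G₁.card_neighborFinset_eq_degree, hr₁ v]; omega
    obtain ⟨u, hu⟩ := hd
    exact ⟨u, (SimpleGraph.mem_neighborFinset _ _ _).mp hu⟩
  have hinc : ∀ v : V₁, ∃ e : G₁.edgeSet, v ∈ (e : Sym2 V₁) := by
    intro v
    obtain ⟨u, hu⟩ := hnbr v
    exact ⟨⟨s(v, u), hu⟩, by simp⟩
  have hmiss' : ∀ v : V₁, ∃ e : G₁.edgeSet, v ∉ (e : Sym2 V₁) := by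
    intro v
    obtain ⟨u, hu⟩ := hnbr v
    have h2 : 2 ≤ #(G₁.neighborFinset u) := by
      rw [G₁.card_neighborFinset_eq_degree, hr₁ u]; exact hr₁2
    have hne : ((G₁.neighborFinset u).erase v).Nonempty := by
      rw [← Finset.card_pos]
      have := Finset.pred_card_le_card_erase (s := G₁.neighborFinset u) (a := v)
      omega
    obtain ⟨u', hu'⟩ := hne
    have hadj : G₁.Adj u u' := (SimpleGraph.mem_neighborFinset _ _ _).mp
      (Finset.mem_of_mem_erase hu')
    have hu'v : u' ≠ v := Finset.ne_of_mem_erase hu'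
    refine ⟨⟨s(u, u'), hadj⟩, ?_⟩
    simp only [Sym2.mem_iff]
    push_neg
    exact ⟨hu.ne, fun h => hu'v h.symm⟩
  have hcard3 : 3 ≤ Fintype.card V₁ := by
    have hins : (insert v₀ (G₁.neighborFinset v₀)).card = r₁ + 1 := by
      rw [Finset.card_insert_of_notMem (SimpleGraph.notMem_neighborFinset_self _ _),
        G₁.card_neighborFinset_eq_degree, hr₁ v₀]
    have hle := Finset.card_le_univ (insert v₀ (G₁.neighborFinset v₀))
    rw [hins] at hle
    omega
  have hmiss : ∀ e : G₁.edgeSet, ∃ v : V₁, v ∉ (e : Sym2 V₁) := by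
    rintro ⟨e, he⟩
    revert he
    induction e using Sym2.ind with
    | _ a b =>
      intro he
      by_contra hno
      push_neg at hno
      have hsub : (Finset.univ : Finset V₁) ⊆ {a, b} := by
        intro x _
        have hx := hno x
        simp only [Sym2.mem_iff] at hx
        simpa using hx
      have hcard := Finset.card_le_card hsub
      have hle : ({a, b} : Finset V₁).card ≤ 2 :=
        (Finset.card_insert_le _ _).trans (by simp)
      rw [Finset.card_univ] at hcard
      omega
  -- spectral facts
  have hevv : ∀ v, (∑ u, if G₁.Adj v u then X u else 0) = lam * X v := by
    intro v
    have h1 := congrFun hev v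
    simp only [Matrix.mulVec, dotProduct, SimpleGraph.adjMatrix_apply,
      Pi.smul_apply, smul_eq_mul, ite_mul, one_mul, zero_mul] at h1
    exact h1
  have hdegf : ∀ u, Finset.univ.filter (G₁.Adj u) = G₁.neighborFinset u := by
    intro u; ext x; simp [SimpleGraph.mem_neighborFinset]
  have hsumX : ∑ v, X v = 0 := by
    have h1 : ∀ u, (∑ v, if G₁.Adj v u then X u else 0) = (r₁:ℝ) * X u := by
      intro u
      have h2 : ∀ v, (if G₁.Adj v u then X u else 0)
          = (if G₁.Adj u v then (1:ℝ) else 0) * X u := by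
        intro v; rw [G₁.adj_comm]; split <;> ring
      rw [Finset.sum_congr rfl fun v _ => h2 v, ← Finset.sum_mul]
      congr 1
      rw [Finset.sum_boole, hdegf u, G₁.card_neighborFinset_eq_degree, hr₁ u]
    have h3 : ∑ v, (∑ u, if G₁.Adj v u then X u else 0) = lam * ∑ v, X v := by
      rw [Finset.mul_sum]
      exact Finset.sum_congr rfl fun v _ => hevv v
    rw [Finset.sum_comm] at h3
    rw [Finset.sum_congr rfl fun u _ => h1 u, ← Finset.mul_sum] at h3
    have h4 : ((r₁:ℝ) - lam) * ∑ v, X v = 0 := by linarith [h3]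
    rcases mul_eq_zero.mp h4 with h | h
    · exact absurd (by linarith : lam = (r₁:ℝ)) hlam
    · exact h
  set Z : G₁.edgeSet → ℝ := fun e => ∑ v, if v ∈ (e : Sym2 V₁) then X v else 0 with hZdef
  have hsub : ∀ f : Sym2 V₁ → ℝ, ∑ e : G₁.edgeSet, f e = ∑ e ∈ G₁.edgeFinset, f e := by
    intro f
    exact (Finset.sum_subtype G₁.edgeFinset (fun x => SimpleGraph.mem_edgeFinset) f).symm
  have hcount1 : ∀ v : V₁, (∑ e : G₁.edgeSet, if v ∈ (e : Sym2 V₁) then (1:ℝ) else 0) = r₁ := by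
    intro v
    rw [hsub fun e => if v ∈ e then (1:ℝ) else 0, Finset.sum_boole]
    have hfe : G₁.edgeFinset.filter (fun e => v ∈ e) = G₁.incidenceFinset v :=
      (SimpleGraph.incidenceFinset_eq_filter _ _).symm
    rw [hfe, SimpleGraph.card_incidenceFinset_eq_degree, hr₁ v]
  have hcount2 : ∀ u v : V₁, u ≠ v →
      (∑ e : G₁.edgeSet, if v ∈ (e : Sym2 V₁) ∧ u ∈ (e : Sym2 V₁) then (1:ℝ) else 0)
        = if G₁.Adj v u then 1 else 0 := by
    intro u v huv
    rw [hsub fun e => if v ∈ e ∧ u ∈ e then (1:ℝ) else 0]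
    have h1 : ∀ e ∈ G₁.edgeFinset, (if v ∈ e ∧ u ∈ e then (1:ℝ) else 0)
        = if e = s(v, u) then (1:ℝ) else 0 := by
      intro e _
      simp only [Sym2.mem_and_mem_iff (Ne.symm huv)]
    rw [Finset.sum_congr rfl h1, Finset.sum_ite_eq' G₁.edgeFinset s(v, u) fun _ => (1:ℝ)]
    simp only [SimpleGraph.mem_edgeFinset, SimpleGraph.mem_edgeSet]
  have hZr : ∀ v, (∑ e : G₁.edgeSet, if v ∈ (e : Sym2 V₁) then Z e else 0)
      = (lam + r₁) * X v := by
    intro v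
    have h1 : ∀ e : G₁.edgeSet, (if v ∈ (e : Sym2 V₁) then Z e else 0)
        = ∑ u, (if v ∈ (e : Sym2 V₁) ∧ u ∈ (e : Sym2 V₁) then X u else 0) := by
      intro e
      by_cases h : v ∈ (e : Sym2 V₁)
      · rw [if_pos h]
        simp only [hZdef]
        exact Finset.sum_congr rfl fun u _ => by simp [h]
      · rw [if_neg h]
        symm; apply Finset.sum_eq_zero; intro u _; rw [if_neg (by tauto)]
    rw [Finset.sum_congr rfl fun e _ => h1 e, Finset.sum_comm]
    have h2 : ∀ u, (∑ e : G₁.edgeSet, if v ∈ (e:Sym2 V₁) ∧ u ∈ (e:Sym2 V₁) then X u else 0)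
        = (if u = v then (r₁:ℝ) * X u else 0) + (if G₁.Adj v u then X u else 0) := by
      intro u
      have hfac : (∑ e : G₁.edgeSet, if v ∈ (e:Sym2 V₁) ∧ u ∈ (e:Sym2 V₁) then X u else 0)
          = (∑ e : G₁.edgeSet, if v ∈ (e:Sym2 V₁) ∧ u ∈ (e:Sym2 V₁) then (1:ℝ) else 0) * X u := by
        rw [Finset.sum_mul]
        exact Finset.sum_congr rfl fun e _ => by split <;> ring
      by_cases h : u = v
      · subst h
        rw [hfac]
        have hcc : (∑ e : G₁.edgeSet, if u ∈ (e:Sym2 V₁) ∧ u ∈ (e:Sym2 V₁) then (1:ℝ) else 0)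
            = r₁ := by
          rw [← hcount1 u]; exact Finset.sum_congr rfl fun e _ => by simp
        rw [hcc, if_pos rfl, if_neg (G₁.irrefl (v := u))]
        ring
      · rw [hfac, hcount2 u v h, if_neg h]
        split <;> ring
    rw [Finset.sum_congr rfl fun u _ => h2 u, Finset.sum_add_distrib,
      Finset.sum_ite_eq' Finset.univ v fun u => (r₁:ℝ) * X u, hevv v]
    simp only [Finset.mem_univ, if_true]
    ring
  have hZsum : ∑ e, Z e = 0 := by
    calc ∑ e, Z e = ∑ e : G₁.edgeSet, ∑ v, (if v ∈ (e:Sym2 V₁) then X v else 0) := by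
          simp only [hZdef]
      _ = ∑ v, ∑ e : G₁.edgeSet, (if v ∈ (e:Sym2 V₁) then X v else 0) := Finset.sum_comm
      _ = ∑ v, (r₁:ℝ) * X v := by
          refine Finset.sum_congr rfl fun v _ => ?_
          have hh : (∑ e : G₁.edgeSet, if v ∈ (e:Sym2 V₁) then X v else 0)
              = (∑ e : G₁.edgeSet, if v ∈ (e:Sym2 V₁) then (1:ℝ) else 0) * X v := by
            rw [Finset.sum_mul]; exact Finset.sum_congr rfl fun e _ => by split <;> ring
          rw [hh, hcount1 v]
      _ = (r₁:ℝ) * ∑ v, X v := by rw [Finset.mul_sum]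
      _ = 0 := by rw [hsumX, mul_zero]
  have hXZ : (lam + r₁) * ∑ v, X v ^ 2 = ∑ e, Z e ^ 2 := by
    calc (lam + ↑r₁) * ∑ v, X v ^ 2 = ∑ v, ((lam + ↑r₁) * X v) * X v := by
          rw [Finset.mul_sum]; exact Finset.sum_congr rfl fun v _ => by ring
      _ = ∑ v, (∑ e : G₁.edgeSet, if v ∈ (e:Sym2 V₁) then Z e else 0) * X v :=
          Finset.sum_congr rfl fun v _ => by rw [hZr v]
      _ = ∑ v, ∑ e : G₁.edgeSet, (if v ∈ (e:Sym2 V₁) then Z e * X v else 0) := by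
          refine Finset.sum_congr rfl fun v _ => ?_
          rw [Finset.sum_mul]
          exact Finset.sum_congr rfl fun e _ => by split <;> ring
      _ = ∑ e : G₁.edgeSet, ∑ v, (if v ∈ (e:Sym2 V₁) then Z e * X v else 0) := Finset.sum_comm
      _ = ∑ e, Z e ^ 2 := by
          refine Finset.sum_congr rfl fun e _ => ?_
          have hh : ∑ v, (if v ∈ (e:Sym2 V₁) then Z e * X v else 0)
              = Z e * ∑ v, (if v ∈ (e:Sym2 V₁) then X v else 0) := by
            rw [Finset.mul_sum]; exact Finset.sum_congr rfl fun v _ => by split <;> ring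
          rw [hh, show (∑ v, if v ∈ (e:Sym2 V₁) then X v else 0) = Z e by simp only [hZdef]]
          ring
  have hX2 : 0 < ∑ v, X v ^ 2 := by
    obtain ⟨v, hv⟩ := Function.ne_iff.mp hX
    refine Finset.sum_pos' (fun i _ => sq_nonneg _) ⟨v, Finset.mem_univ v, ?_⟩
    have : X v ≠ 0 := hv
    positivity
  have hlr : 0 ≤ lam + r₁ := by
    nlinarith [Finset.sum_nonneg (fun e (_ : e ∈ Finset.univ) => sq_nonneg (Z e))]
  have hD : 0 ≤ 4 * (1 + lam) ^ 2 + 9 * (lam + (r₁:ℝ)) := by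
    nlinarith [sq_nonneg (1 + lam)]
  have key : ∀ t : ℝ, 3 * t ^ 2 - 4 * (1 + lam) * t - 3 * (lam + (r₁:ℝ)) = 0 →
      IsEigenvalue (eccMatrix (subEdgeJoin G₁ G₂)) (-3 * t) := by
    intro t ht
    by_cases ht0 : t = 0
    · subst ht0
      have hlr0 : lam + (r₁:ℝ) = 0 := by linarith [ht]
      have hZ0 : ∀ e, Z e = 0 := by
        have h0 : ∑ e, Z e ^ 2 = 0 := by rw [← hXZ, hlr0, zero_mul]
        intro e
        have h1 := (Finset.sum_eq_zero_iff_of_nonneg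
          (fun i (_ : i ∈ Finset.univ) => sq_nonneg (Z i))).mp h0 e (Finset.mem_univ e)
        exact pow_eq_zero_iff (two_ne_zero) |>.mp h1
      have hXker : X ∈ LinearMap.ker (Matrix.mulVecLin (incMat G₁)ᵀ) := by
        rw [LinearMap.mem_ker]
        funext e
        show ((incMat G₁)ᵀ.mulVec X) e = 0
        simp only [Matrix.mulVec, dotProduct, Matrix.transpose_apply, incMat,
          Matrix.of_apply]
        have h1 := hZ0 e
        simp only [hZdef] at h1
        have h2 : ∑ v, (if v ∈ (e:Sym2 V₁) then (1:ℝ) else 0) * X v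
            = ∑ v, if v ∈ (e:Sym2 V₁) then X v else 0 :=
          Finset.sum_congr rfl fun v _ => by split <;> ring
        exact h2.trans h1
      have hmn : Fintype.card V₁ ≤ Fintype.card G₁.edgeSet := by
        have hhs := G₁.sum_degrees_eq_twice_card_edges
        have hdd : ∑ v, G₁.degree v = Fintype.card V₁ * r₁ := by
          rw [Finset.sum_congr rfl fun v _ => hr₁ v, Finset.sum_const, Finset.card_univ,
            smul_eq_mul]
        rw [SimpleGraph.edgeFinset_card] at hhs
        have h5 : Fintype.card V₁ * 2 ≤ Fintype.card V₁ * r₁ := Nat.mul_le_mul_left _ hr₁2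
        omega
      have hrankT : (incMat G₁)ᵀ.rank < Fintype.card V₁ := by
        have h2 := LinearMap.finrank_range_add_finrank_ker ((incMat G₁)ᵀ.mulVecLin)
        rw [Module.finrank_fintype_fun_eq_card] at h2
        have h3 : 0 < Module.finrank ℝ (LinearMap.ker ((incMat G₁)ᵀ.mulVecLin)) := by
          rw [Module.finrank_pos_iff]
          exact ⟨⟨X, hXker⟩, 0, fun hc => hX (by simpa using congrArg Subtype.val hc)⟩
        rw [Matrix.rank]
        omega
      rw [Matrix.rank_transpose] at hrankT
      have hker : ∃ Z₀ : G₁.edgeSet → ℝ, Z₀ ≠ 0 ∧ (incMat G₁).mulVec Z₀ = 0 := by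
        have h2 := LinearMap.finrank_range_add_finrank_ker ((incMat G₁).mulVecLin)
        rw [Module.finrank_fintype_fun_eq_card] at h2
        have h3 : 0 < Module.finrank ℝ (LinearMap.ker ((incMat G₁).mulVecLin)) := by
          have h4 : (incMat G₁).rank < Fintype.card G₁.edgeSet := lt_of_lt_of_le hrankT hmn
          rw [Matrix.rank] at h4
          omega
        rw [Module.finrank_pos_iff] at h3
        obtain ⟨x, hx⟩ := exists_ne (0 : LinearMap.ker ((incMat G₁).mulVecLin))
        refine ⟨x.val, fun hc => hx (Subtype.ext hc), ?_⟩
        have h5 := x.2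
        rw [LinearMap.mem_ker] at h5
        rw [← Matrix.mulVecLin_apply]
        exact h5
      obtain ⟨Z₀, hZ₀ne, hZ₀ker⟩ := hker
      have hRZ₀ : ∀ v, (∑ e : G₁.edgeSet, if v ∈ (e:Sym2 V₁) then Z₀ e else 0) = 0 := by
        intro v
        have h1 := congrFun hZ₀ker v
        simp only [Matrix.mulVec, dotProduct, Pi.zero_apply, incMat,
          Matrix.of_apply] at h1
        have h2 : (∑ e : G₁.edgeSet, if v ∈ (e:Sym2 V₁) then Z₀ e else 0)
            = ∑ e : G₁.edgeSet, (if v ∈ (e:Sym2 V₁) then (1:ℝ) else 0) * Z₀ e :=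
          Finset.sum_congr rfl fun e _ => by split <;> ring
        exact h2.trans h1
      have hcol2 : ∀ e : G₁.edgeSet, (∑ v, if v ∈ (e:Sym2 V₁) then (1:ℝ) else 0) = 2 := by
        rintro ⟨e, he⟩
        revert he
        induction e using Sym2.ind with
        | _ a b =>
          intro he
          have hab : a ≠ b := fun h => G₁.irrefl (h ▸ G₁.mem_edgeSet.mp he)
          calc ∑ v, (if v ∈ (((⟨s(a,b), he⟩ : G₁.edgeSet)) : Sym2 V₁) then (1:ℝ) else 0)
              = ∑ v, ((if v = a then (1:ℝ) else 0) + (if v = b then (1:ℝ) else 0)) := by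
                refine Finset.sum_congr rfl fun v _ => ?_
                by_cases h1 : v = a
                · subst h1
                  rw [if_pos (by simp [Sym2.mem_iff]), if_pos rfl, if_neg hab]
                  ring
                · by_cases h2 : v = b
                  · subst h2
                    rw [if_pos (by simp [Sym2.mem_iff]), if_neg h1, if_pos rfl]
                    ring
                  · rw [if_neg (by simp [Sym2.mem_iff, h1, h2]), if_neg h1, if_neg h2]
                    ring
            _ = 2 := by
                rw [Finset.sum_add_distrib, Finset.sum_ite_eq' Finset.univ a fun _ => (1:ℝ),
                  Finset.sum_ite_eq' Finset.univ b fun _ => (1:ℝ)]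
                norm_num
      have hZ₀sum : ∑ e, Z₀ e = 0 := by
        have h1 : ∑ v, ∑ e : G₁.edgeSet, (if v ∈ (e:Sym2 V₁) then Z₀ e else 0) = 0 :=
          Finset.sum_eq_zero fun v _ => hRZ₀ v
        rw [Finset.sum_comm] at h1
        have h2 : ∀ e : G₁.edgeSet, (∑ v, if v ∈ (e:Sym2 V₁) then Z₀ e else 0) = 2 * Z₀ e := by
          intro e
          have hh : (∑ v, if v ∈ (e:Sym2 V₁) then Z₀ e else 0)
              = (∑ v, if v ∈ (e:Sym2 V₁) then (1:ℝ) else 0) * Z₀ e := by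
            rw [Finset.sum_mul]
            exact Finset.sum_congr rfl fun v _ => by split <;> ring
          rw [hh, hcol2 e]
        rw [Finset.sum_congr rfl fun e _ => h2 e, ← Finset.mul_sum] at h1
        linarith
      refine ⟨Sum.elim (Sum.elim (fun _ => (0:ℝ)) Z₀) (fun _ => 0), ?_, ?_⟩
      · intro hc
        apply hZ₀ne
        funext e
        have := congrFun hc (Sum.inl (Sum.inr e))
        simpa using this
      · funext x
        rcases x with (v | e) | w
        · simp only [Matrix.mulVec, dotProduct, Fintype.sum_sum_type, Sum.elim_inl,
            Sum.elim_inr, Pi.smul_apply, smul_eq_mul, mul_zero, Finset.sum_const_zero,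
            add_zero, zero_add, eM_ve hinc hmiss hmiss' w₀ v₀]
          have step : ∀ e : G₁.edgeSet, (if v ∈ (e:Sym2 V₁) then (0:ℝ) else 3) * Z₀ e
              = 3 * Z₀ e - 3 * (if v ∈ (e:Sym2 V₁) then Z₀ e else 0) := fun e => by
            split <;> ring
          rw [Finset.sum_congr rfl fun e _ => step e, Finset.sum_sub_distrib,
            ← Finset.mul_sum, ← Finset.mul_sum, hZ₀sum, hRZ₀ v]
          ring
        · simp only [Matrix.mulVec, dotProduct, Fintype.sum_sum_type, Sum.elim_inl,
            Sum.elim_inr, Pi.smul_apply, smul_eq_mul, mul_zero, zero_mul,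
            Finset.sum_const_zero, add_zero, zero_add,
            eM_ee hinc hmiss hmiss' w₀ v₀]
        · simp only [Matrix.mulVec, dotProduct, Fintype.sum_sum_type, Sum.elim_inl,
            Sum.elim_inr, Pi.smul_apply, smul_eq_mul, mul_zero, zero_mul,
            Finset.sum_const_zero, add_zero, zero_add,
            eM_we hinc hmiss hmiss' w₀ v₀]
    · refine ⟨Sum.elim (Sum.elim (fun v => t * X v) Z) (fun _ => 0), ?_, ?_⟩
      · obtain ⟨v, hv⟩ := Function.ne_iff.mp hX
        intro h0
        have h1 := congrFun h0 (Sum.inl (Sum.inl v))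
        simp only [Sum.elim_inl, Pi.zero_apply] at h1
        exact hv (by
          rcases mul_eq_zero.mp h1 with h | h
          · exact absurd h ht0
          · exact h)
      · funext x
        rcases x with (v | e) | w
        · simp only [Matrix.mulVec, dotProduct, Fintype.sum_sum_type, Sum.elim_inl,
            Sum.elim_inr, Pi.smul_apply, smul_eq_mul, mul_zero, Finset.sum_const_zero,
            add_zero, eM_vv hinc hmiss hmiss' w₀ v₀, eM_ve hinc hmiss hmiss' w₀ v₀]
          have hS1 : ∑ v', (if v ≠ v' ∧ ¬ G₁.Adj v v' then (4:ℝ) else 0) * (t * X v')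
              = -(4 * t * (1 + lam) * X v) := by
            have step : ∀ v', (if v ≠ v' ∧ ¬ G₁.Adj v v' then (4:ℝ) else 0) * (t * X v')
                = 4 * (t * X v') - (if v = v' then 4 * (t * X v') else 0)
                  - (if G₁.Adj v v' then 4 * (t * X v') else 0) := by
              intro v'
              by_cases h1 : v = v'
              · subst h1
                rw [if_neg (by simp), if_pos rfl, if_neg (G₁.irrefl (v := v))]
                ring
              · by_cases h2 : G₁.Adj v v'
                · rw [if_neg (by tauto), if_neg h1, if_pos h2]; ring
                · rw [if_pos ⟨h1, h2⟩, if_neg h1, if_neg h2]; ring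
            rw [Finset.sum_congr rfl fun v' _ => step v', Finset.sum_sub_distrib,
              Finset.sum_sub_distrib]
            have e1 : ∑ v', (4:ℝ) * (t * X v') = 4 * t * ∑ v', X v' := by
              rw [Finset.mul_sum]
              exact Finset.sum_congr rfl fun v' _ => by ring
            have e2 : ∑ v', (if v = v' then 4 * (t * X v') else 0) = 4 * (t * X v) := by
              rw [Finset.sum_ite_eq Finset.univ v fun v' => 4 * (t * X v')]
              simp
            have e3 : ∑ v', (if G₁.Adj v v' then 4 * (t * X v') else 0)
                = 4 * t * (lam * X v) := by
              have hh : ∀ v', (if G₁.Adj v v' then 4 * (t * X v') else 0)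
                  = (4 * t) * (if G₁.Adj v v' then X v' else 0) := fun v' => by split <;> ring
              rw [Finset.sum_congr rfl fun v' _ => hh v', ← Finset.mul_sum, hevv v]
            rw [e1, e2, e3, hsumX]
            ring
          have hS2 : ∑ e : G₁.edgeSet, (if v ∈ (e : Sym2 V₁) then (0:ℝ) else 3) * Z e
              = -(3 * (lam + ↑r₁) * X v) := by
            have step : ∀ e : G₁.edgeSet, (if v ∈ (e : Sym2 V₁) then (0:ℝ) else 3) * Z e
                = 3 * Z e - 3 * (if v ∈ (e : Sym2 V₁) then Z e else 0) := fun e => by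
              split <;> ring
            rw [Finset.sum_congr rfl fun e _ => step e, Finset.sum_sub_distrib,
              ← Finset.mul_sum, ← Finset.mul_sum, hZsum, hZr v]
            ring
          rw [hS1, hS2]
          linear_combination (X v) * ht
        · simp only [Matrix.mulVec, dotProduct, Fintype.sum_sum_type, Sum.elim_inl,
            Sum.elim_inr, Pi.smul_apply, smul_eq_mul, mul_zero, zero_mul,
            Finset.sum_const_zero, add_zero, eM_ev hinc hmiss hmiss' w₀ v₀,
            eM_ee hinc hmiss hmiss' w₀ v₀]
          have step : ∀ v', (if v' ∈ (e : Sym2 V₁) then (0:ℝ) else 3) * (t * X v')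
              = 3 * t * X v' - 3 * t * (if v' ∈ (e : Sym2 V₁) then X v' else 0) := fun v' => by
            split <;> ring
          rw [Finset.sum_congr rfl fun v' _ => step v', Finset.sum_sub_distrib,
            ← Finset.mul_sum, ← Finset.mul_sum, hsumX]
          have hZe : (∑ v', if v' ∈ (e : Sym2 V₁) then X v' else 0) = Z e := by
            simp only [hZdef]
          rw [hZe]
          ring
        · simp only [Matrix.mulVec, dotProduct, Fintype.sum_sum_type, Sum.elim_inl,
            Sum.elim_inr, Pi.smul_apply, smul_eq_mul, mul_zero, zero_mul,
            Finset.sum_const_zero, add_zero, eM_wv hinc hmiss hmiss' w₀ v₀,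
            eM_we hinc hmiss hmiss' w₀ v₀]
          have e1 : ∑ v', (2:ℝ) * (t * X v') = 2 * t * ∑ v', X v' := by
            rw [Finset.mul_sum]
            exact Finset.sum_congr rfl fun v' _ => by ring
          rw [e1, hsumX]
          ring
  have hsq : Real.sqrt (4 * (1 + lam) ^ 2 + 9 * (lam + (r₁:ℝ))) ^ 2
      = 4 * (1 + lam) ^ 2 + 9 * (lam + (r₁:ℝ)) := Real.sq_sqrt hD
  constructor
  · have h := key ((2 * (1 + lam) - Real.sqrt (4 * (1 + lam) ^ 2 + 9 * (lam + (r₁:ℝ)))) / 3)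
      (by linear_combination hsq / 3)
    have heq : -3 * ((2 * (1 + lam) - Real.sqrt (4 * (1 + lam) ^ 2 + 9 * (lam + (r₁:ℝ)))) / 3)
        = -2 * (1 + lam) + Real.sqrt (4 * (1 + lam) ^ 2 + 9 * (lam + (r₁:ℝ))) := by ring
    rwa [heq] at h
  · have h := key ((2 * (1 + lam) + Real.sqrt (4 * (1 + lam) ^ 2 + 9 * (lam + (r₁:ℝ)))) / 3)
      (by linear_combination hsq / 3)
    have heq : -3 * ((2 * (1 + lam) + Real.sqrt (4 * (1 + lam) ^ 2 + 9 * (lam + (r₁:ℝ)))) / 3)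
        = -2 * (1 + lam) - Real.sqrt (4 * (1 + lam) ^ 2 + 9 * (lam + (r₁:ℝ))) := by ring
    rwa [heq] at h
end

section
/- Let G₀, G₁, G₂ be regular graphs of degrees r₀, r₁, r₂ and orders p₀, p₁, p₂, with diam(G₁) ≥ 2 (G₀ non-complete as needed). If λ ≠ r₀ is an adjacency eigenvalue of G₀, then −2(1+λ) is an eigenvalue of ε(G₀ ∨ (G₁ ∪ G₂)); similarly −2(1+β) for any adjacency eigenvalue β ≠ r₁ of G₁, and −2(1+γ) for any adjacency eigenvalue γ ≠ r₂ of G₂. -/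
open SimpleGraph Matrix Finset

attribute [local instance] Fintype.ofFinite Classical.propDecidable

noncomputable section StmtAux
set_option linter.unusedSectionVars false
set_option linter.unusedVariables false

section Aux
variable {V₀ V₁ V₂ : Type*} [Fintype V₀] [Fintype V₁] [Fintype V₂]
  {G₀ : SimpleGraph V₀} {G₁ : SimpleGraph V₁} {G₂ : SimpleGraph V₂}

lemma jadj_ll {a b : V₀} :
    (joinGraph G₀ (disjUnion G₁ G₂)).Adj (Sum.inl a) (Sum.inl b) ↔ G₀.Adj a b := by
  simp only [joinGraph, fromRel_adj, ne_eq, Sum.inl.injEq]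
  constructor
  · rintro ⟨h, h2 | h2⟩
    · exact h2
    · exact h2.symm
  · intro h; exact ⟨h.ne, Or.inl h⟩

lemma jadj_lr {a : V₀} {w : V₁ ⊕ V₂} :
    (joinGraph G₀ (disjUnion G₁ G₂)).Adj (Sum.inl a) (Sum.inr w) := by
  simp [joinGraph, fromRel_adj]

lemma jadj_rl {a : V₀} {w : V₁ ⊕ V₂} :
    (joinGraph G₀ (disjUnion G₁ G₂)).Adj (Sum.inr w) (Sum.inl a) :=
  jadj_lr.symm

lemma jadj_rr {w w' : V₁ ⊕ V₂} :
    (joinGraph G₀ (disjUnion G₁ G₂)).Adj (Sum.inr w) (Sum.inr w') ↔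
      (disjUnion G₁ G₂).Adj w w' := by
  simp only [joinGraph, fromRel_adj, ne_eq, Sum.inr.injEq]
  constructor
  · rintro ⟨h, h2 | h2⟩
    · exact h2
    · exact h2.symm
  · intro h; exact ⟨h.ne, Or.inl h⟩

lemma duadj_ll {c c' : V₁} :
    (disjUnion G₁ G₂).Adj (Sum.inl c) (Sum.inl c') ↔ G₁.Adj c c' := by
  simp only [_root_.disjUnion, fromRel_adj, ne_eq, Sum.inl.injEq]
  constructor
  · rintro ⟨h, h2 | h2⟩
    · exact h2
    · exact h2.symm
  · intro h; exact ⟨h.ne, Or.inl h⟩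

lemma duadj_rr {d d' : V₂} :
    (disjUnion G₁ G₂).Adj (Sum.inr d) (Sum.inr d') ↔ G₂.Adj d d' := by
  simp only [_root_.disjUnion, fromRel_adj, ne_eq, Sum.inr.injEq]
  constructor
  · rintro ⟨h, h2 | h2⟩
    · exact h2
    · exact h2.symm
  · intro h; exact ⟨h.ne, Or.inl h⟩

lemma duadj_lr {c : V₁} {d : V₂} :
    ¬ (disjUnion G₁ G₂).Adj (Sum.inl c) (Sum.inr d) := by
  simp [_root_.disjUnion, fromRel_adj]

lemma duadj_rl {c : V₁} {d : V₂} :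
    ¬ (disjUnion G₁ G₂).Adj (Sum.inr d) (Sum.inl c) := by
  simp [_root_.disjUnion, fromRel_adj]

end Aux

section Aux2
set_option linter.unusedSectionVars false
variable {V₀ V₁ V₂ : Type*} [Fintype V₀] [Fintype V₁] [Fintype V₂]
  {G₀ : SimpleGraph V₀} {G₁ : SimpleGraph V₁} {G₂ : SimpleGraph V₂}
  [Nonempty V₀] [Nonempty V₁] [Nonempty V₂]

local notation "H" => joinGraph G₀ (disjUnion G₁ G₂)

lemma H_dist_le_two (u v : V₀ ⊕ (V₁ ⊕ V₂)) : (H).dist u v ≤ 2 := by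
  match u, v with
  | Sum.inl a, Sum.inl b =>
    have c : V₁ := Classical.arbitrary V₁
    exact (SimpleGraph.dist_le
      (Walk.cons (jadj_lr (w := Sum.inl c)) (Walk.cons jadj_rl Walk.nil))).trans (by simp)
  | Sum.inl a, Sum.inr x =>
    have : (H).dist (Sum.inl a) (Sum.inr x) = 1 := dist_eq_one_iff_adj.mpr jadj_lr
    omega
  | Sum.inr x, Sum.inl a =>
    have : (H).dist (Sum.inr x) (Sum.inl a) = 1 := dist_eq_one_iff_adj.mpr jadj_rl
    omega
  | Sum.inr x, Sum.inr y =>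
    have a : V₀ := Classical.arbitrary V₀
    exact (SimpleGraph.dist_le
      (Walk.cons (jadj_rl (a := a)) (Walk.cons jadj_lr Walk.nil))).trans (by simp)

lemma H_reachable (u v : V₀ ⊕ (V₁ ⊕ V₂)) : (H).Reachable u v := by
  match u, v with
  | Sum.inl a, Sum.inl b =>
    have c : V₁ := Classical.arbitrary V₁
    exact (Walk.cons (jadj_lr (w := Sum.inl c)) (Walk.cons jadj_rl Walk.nil)).reachable
  | Sum.inl a, Sum.inr x => exact (jadj_lr).toWalk.reachable
  | Sum.inr x, Sum.inl a => exact (jadj_rl).toWalk.reachable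
  | Sum.inr x, Sum.inr y =>
    have a : V₀ := Classical.arbitrary V₀
    exact (Walk.cons (jadj_rl (a := a)) (Walk.cons jadj_lr Walk.nil)).reachable

lemma H_dist_eq_two {u v : V₀ ⊕ (V₁ ⊕ V₂)} (hne : u ≠ v) (hadj : ¬ (H).Adj u v) :
    (H).dist u v = 2 := by
  have h1 := H_dist_le_two (G₀ := G₀) (G₁ := G₁) (G₂ := G₂) u v
  have h2 : (H).dist u v ≠ 0 := ((H_reachable u v).pos_dist_of_ne hne).ne'
  have h3 : (H).dist u v ≠ 1 := fun h => hadj (dist_eq_one_iff_adj.mp h)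
  omega

lemma exists_nonadj {r : ℕ} (hr : G₀.IsRegularOfDegree r) (hnc : G₀ ≠ ⊤) (a : V₀) :
    ∃ b, b ≠ a ∧ ¬ G₀.Adj a b := by
  by_contra hcon
  push_neg at hcon
  have hdeg : G₀.degree a = Fintype.card V₀ - 1 := by
    have : G₀.neighborFinset a = Finset.univ.erase a := by
      ext b
      simp only [mem_neighborFinset, Finset.mem_erase, Finset.mem_univ, and_true]
      exact ⟨fun h => (G₀.ne_of_adj h).symm, fun h => hcon b h⟩
    rw [SimpleGraph.degree, this, Finset.card_erase_of_mem (Finset.mem_univ a),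
      Finset.card_univ]
  apply hnc
  ext u v
  simp only [top_adj]
  constructor
  · exact fun h => G₀.ne_of_adj h
  · intro huv
    have hdu : G₀.degree u = Fintype.card V₀ - 1 := by rw [hr u, ← hr a, hdeg]
    have hsub : G₀.neighborFinset u ⊆ Finset.univ.erase u := by
      intro b hb
      simp only [mem_neighborFinset] at hb
      exact Finset.mem_erase.mpr ⟨(G₀.ne_of_adj hb).symm, Finset.mem_univ b⟩
    have hcard : (Finset.univ.erase u).card ≤ (G₀.neighborFinset u).card := by
      rw [Finset.card_erase_of_mem (Finset.mem_univ u), Finset.card_univ]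
      rw [SimpleGraph.degree] at hdu
      omega
    have := Finset.eq_of_subset_of_card_le hsub hcard
    have : v ∈ G₀.neighborFinset u := by
      rw [this]; exact Finset.mem_erase.mpr ⟨Ne.symm huv, Finset.mem_univ v⟩
    exact (mem_neighborFinset _ _ _).mp this

lemma H_ecc_eq_two {r : ℕ} (hr : G₀.IsRegularOfDegree r) (hnc : G₀ ≠ ⊤)
    (u : V₀ ⊕ (V₁ ⊕ V₂)) : ecc (H) u = 2 := by
  have hex : ∃ v, (H).dist u v = 2 := by
    match u with
    | Sum.inl a =>
      obtain ⟨b, hb, hnadj⟩ := exists_nonadj hr hnc a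
      exact ⟨Sum.inl b, H_dist_eq_two (by simp [hb.symm]) (fun h => hnadj (jadj_ll.mp h))⟩
    | Sum.inr (Sum.inl c) =>
      have d : V₂ := Classical.arbitrary V₂
      refine ⟨Sum.inr (Sum.inr d), H_dist_eq_two (by simp) (fun h => ?_)⟩
      exact duadj_lr (jadj_rr.mp h)
    | Sum.inr (Sum.inr d) =>
      have c : V₁ := Classical.arbitrary V₁
      refine ⟨Sum.inr (Sum.inl c), H_dist_eq_two (by simp) (fun h => ?_)⟩
      exact duadj_rl (jadj_rr.mp h)
  obtain ⟨v, hv⟩ := hex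
  refine le_antisymm ?_ ?_
  · exact Finset.sup_le (fun w _ => H_dist_le_two u w)
  · calc 2 = (H).dist u v := hv.symm
    _ ≤ _ := Finset.le_sup (Finset.mem_univ v)

lemma eccMatrix_H {r : ℕ} (hr : G₀.IsRegularOfDegree r) (hnc : G₀ ≠ ⊤)
    (u v : V₀ ⊕ (V₁ ⊕ V₂)) :
    eccMatrix (H) u v =
      if u ≠ v ∧ ¬ (H).Adj u v then 2 else 0 := by
  unfold eccMatrix
  rw [H_ecc_eq_two hr hnc u, H_ecc_eq_two hr hnc v]
  by_cases h1 : u = v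
  · subst h1
    simp [SimpleGraph.dist_self]
  · by_cases h2 : (H).Adj u v
    · rw [dist_eq_one_iff_adj.mpr h2]
      simp [h1, h2]
    · rw [H_dist_eq_two h1 h2]
      simp [h1, h2]

lemma eccMatrix_H_entry {r : ℕ} (hr : G₀.IsRegularOfDegree r) (hnc : G₀ ≠ ⊤)
    (u v : V₀ ⊕ (V₁ ⊕ V₂)) (x : V₀ ⊕ (V₁ ⊕ V₂) → ℝ) :
    eccMatrix (H) u v * x v =
      2 * x v - 2 * (if u = v then x v else 0) - 2 * (if (H).Adj u v then x v else 0) := by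
  rw [eccMatrix_H hr hnc]
  by_cases h1 : u = v
  · subst h1
    simp [(H).irrefl]
  · by_cases h2 : (H).Adj u v
    · simp [h1, h2]
    · simp [h1, h2]

lemma eig_calc {r : ℕ} (hr : G₀.IsRegularOfDegree r) (hnc : G₀ ≠ ⊤) {lam : ℝ}
    (x : V₀ ⊕ (V₁ ⊕ V₂) → ℝ) (hx : x ≠ 0) (hsum : ∑ u, x u = 0)
    (hA : ∀ u, ∑ v, (if (H).Adj u v then x v else 0) = lam * x u) :
    (eccMatrix (H)).mulVec x = (-2 * (1 + lam)) • x := by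
  funext u
  have : (eccMatrix (H)).mulVec x u = ∑ v, eccMatrix (H) u v * x v := rfl
  rw [this]
  have hrw : ∀ v, eccMatrix (H) u v * x v =
      2 * x v - 2 * (if u = v then x v else 0) - 2 * (if (H).Adj u v then x v else 0) :=
    fun v => eccMatrix_H_entry hr hnc u v x
  rw [Finset.sum_congr rfl (fun v _ => hrw v)]
  rw [Finset.sum_sub_distrib, Finset.sum_sub_distrib, ← Finset.mul_sum, ← Finset.mul_sum,
    ← Finset.mul_sum, hsum, hA u, Finset.sum_ite_eq Finset.univ u x]
  simp only [Finset.mem_univ, if_true, Pi.smul_apply, smul_eq_mul]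
  ring

lemma jadj_rr_ll {c c' : V₁} :
    (H).Adj (Sum.inr (Sum.inl c)) (Sum.inr (Sum.inl c')) ↔ G₁.Adj c c' :=
  jadj_rr.trans duadj_ll

lemma jadj_rr_rr {d d' : V₂} :
    (H).Adj (Sum.inr (Sum.inr d)) (Sum.inr (Sum.inr d')) ↔ G₂.Adj d d' :=
  jadj_rr.trans duadj_rr

lemma jadj_rr_lr {c : V₁} {d : V₂} :
    ¬ (H).Adj (Sum.inr (Sum.inl c)) (Sum.inr (Sum.inr d)) :=
  fun h => duadj_lr (jadj_rr.mp h)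

lemma jadj_rr_rl {c : V₁} {d : V₂} :
    ¬ (H).Adj (Sum.inr (Sum.inr d)) (Sum.inr (Sum.inl c)) :=
  fun h => duadj_rl (jadj_rr.mp h)

end Aux2

lemma adj_mulVec_ite {V : Type*} [Fintype V] (G : SimpleGraph V) (x : V → ℝ) (a : V) :
    (G.adjMatrix ℝ).mulVec x a = ∑ b, (if G.Adj a b then x b else 0) := by
  simp [Matrix.mulVec, dotProduct, SimpleGraph.adjMatrix_apply, ite_mul]

lemma sum_eig_zero {V : Type*} [Fintype V] {G : SimpleGraph V} {r : ℕ}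
    (hr : G.IsRegularOfDegree r) {lam : ℝ} (hlam : lam ≠ r) {x : V → ℝ}
    (hx : (G.adjMatrix ℝ).mulVec x = lam • x) : ∑ v, x v = 0 := by
  have h1 : ∑ a, ((G.adjMatrix ℝ).mulVec x) a = lam * ∑ a, x a := by
    rw [hx]; simp [Finset.mul_sum]
  have h2 : ∑ a, ((G.adjMatrix ℝ).mulVec x) a = (r : ℝ) * ∑ a, x a := by
    simp only [adj_mulVec_ite]
    rw [Finset.sum_comm]
    rw [Finset.mul_sum]
    refine Finset.sum_congr rfl (fun b _ => ?_)
    have : ∑ a, (if G.Adj a b then x b else 0) =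
        (∑ a, (if G.Adj a b then (1 : ℝ) else 0)) * x b := by
      rw [Finset.sum_mul]
      simp [ite_mul]
    rw [this, Finset.sum_boole]
    have : (Finset.univ.filter (fun a => G.Adj a b)) = G.neighborFinset b := by
      ext a
      simp [SimpleGraph.mem_neighborFinset, SimpleGraph.adj_comm]
    rw [this]
    have := hr b
    rw [SimpleGraph.degree] at this
    rw [this]
  have : (lam - (r : ℝ)) * ∑ a, x a = 0 := by rw [sub_mul, h1.symm.trans h2]; ring
  rcases mul_eq_zero.mp this with h | h
  · exact absurd (sub_eq_zero.mp h) hlam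
  · exact h


end StmtAux

/-- For regular graphs `G₀, G₁, G₂` of degrees `r₀, r₁, r₂` with
`diam(G₁) ≥ 2` and `G₀` non-complete: every adjacency eigenvalue `λ ≠ r₀` of `G₀`
yields the eigenvalue `-2(1+λ)` of `ε(G₀ ∨ (G₁ ∪ G₂))`, and similarly for adjacency
eigenvalues `β ≠ r₁` of `G₁` and `γ ≠ r₂` of `G₂`. -/
theorem stmt11 {V₀ V₁ V₂ : Type*} [Fintype V₀] [Fintype V₁] [Fintype V₂]
    (G₀ : SimpleGraph V₀) (G₁ : SimpleGraph V₁) (G₂ : SimpleGraph V₂) (r₀ r₁ r₂ : ℕ)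
    (h₀ : G₀.Connected) (h₁ : G₁.Connected) (h₂ : G₂.Connected)
    (hr₀ : G₀.IsRegularOfDegree r₀) (hr₁ : G₁.IsRegularOfDegree r₁)
    (hr₂ : G₂.IsRegularOfDegree r₂)
    (hdiam : 2 ≤ gdiam G₁) (hnc : G₀ ≠ ⊤) :
    (∀ lam : ℝ, lam ≠ (r₀ : ℝ) → IsEigenvalue (G₀.adjMatrix ℝ) lam →
        IsEigenvalue (eccMatrix (joinGraph G₀ (disjUnion G₁ G₂))) (-2 * (1 + lam))) ∧
      (∀ β : ℝ, β ≠ (r₁ : ℝ) → IsEigenvalue (G₁.adjMatrix ℝ) β →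
        IsEigenvalue (eccMatrix (joinGraph G₀ (disjUnion G₁ G₂))) (-2 * (1 + β))) ∧
      (∀ γ : ℝ, γ ≠ (r₂ : ℝ) → IsEigenvalue (G₂.adjMatrix ℝ) γ →
        IsEigenvalue (eccMatrix (joinGraph G₀ (disjUnion G₁ G₂))) (-2 * (1 + γ))) := by
  haveI : Nonempty V₀ := h₀.nonempty
  haveI : Nonempty V₁ := h₁.nonempty
  haveI : Nonempty V₂ := h₂.nonempty
  refine ⟨?_, ?_, ?_⟩
  · rintro lam hlam ⟨x, hx0, hxe⟩
    have hsumx : ∑ a, x a = 0 := sum_eig_zero hr₀ hlam hxe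
    have hne : Sum.elim x 0 ≠ (0 : V₀ ⊕ (V₁ ⊕ V₂) → ℝ) := by
      intro h
      apply hx0
      funext a
      have := congrFun h (Sum.inl a)
      simpa using this
    refine ⟨Sum.elim x 0, hne, eig_calc hr₀ hnc _ hne ?_ ?_⟩
    · rw [Fintype.sum_sum_type]
      simpa using hsumx
    · intro u
      match u with
      | Sum.inl a =>
        have hax := congrFun hxe a
        rw [adj_mulVec_ite] at hax
        simp only [Fintype.sum_sum_type, Sum.elim_inl, Sum.elim_inr, Pi.zero_apply,
          ite_self, Finset.sum_const_zero, add_zero, jadj_ll]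
        simpa using hax
      | Sum.inr w =>
        simp only [Fintype.sum_sum_type, Sum.elim_inl, Sum.elim_inr, Pi.zero_apply,
          ite_self, Finset.sum_const_zero, add_zero, jadj_rl, if_true]
        simp [hsumx]
  · rintro β hβ ⟨y, hy0, hye⟩
    have hsumy : ∑ c, y c = 0 := sum_eig_zero hr₁ hβ hye
    have hne : Sum.elim (0 : V₀ → ℝ) (Sum.elim y (0 : V₂ → ℝ)) ≠ (0 : V₀ ⊕ (V₁ ⊕ V₂) → ℝ) := by
      intro h
      apply hy0
      funext c
      have := congrFun h (Sum.inr (Sum.inl c))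
      simpa using this
    refine ⟨_, hne, eig_calc hr₀ hnc _ hne ?_ ?_⟩
    · rw [Fintype.sum_sum_type]
      simp only [Sum.elim_inl, Sum.elim_inr, Pi.zero_apply, Finset.sum_const_zero, zero_add]
      rw [Fintype.sum_sum_type]
      simpa using hsumy
    · intro u
      match u with
      | Sum.inl a =>
        simp only [Fintype.sum_sum_type, Sum.elim_inl, Sum.elim_inr, Pi.zero_apply,
          ite_self, Finset.sum_const_zero, zero_add, jadj_lr, if_true, add_zero]
        simp [hsumy]
      | Sum.inr (Sum.inl c) =>
        have hcy := congrFun hye c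
        rw [adj_mulVec_ite] at hcy
        simp only [Fintype.sum_sum_type, Sum.elim_inl, Sum.elim_inr, Pi.zero_apply,
          ite_self, Finset.sum_const_zero, zero_add, add_zero, jadj_rr_ll,
          jadj_rr_lr, if_false]
        simpa using hcy
      | Sum.inr (Sum.inr d) =>
        simp only [Fintype.sum_sum_type, Sum.elim_inl, Sum.elim_inr, Pi.zero_apply,
          ite_self, Finset.sum_const_zero, zero_add, add_zero, jadj_rr_rl, if_false]
        simp
  · rintro γ hγ ⟨z, hz0, hze⟩
    have hsumz : ∑ d, z d = 0 := sum_eig_zero hr₂ hγ hze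
    have hne : Sum.elim (0 : V₀ → ℝ) (Sum.elim (0 : V₁ → ℝ) z) ≠ (0 : V₀ ⊕ (V₁ ⊕ V₂) → ℝ) := by
      intro h
      apply hz0
      funext d
      have := congrFun h (Sum.inr (Sum.inr d))
      simpa using this
    refine ⟨_, hne, eig_calc hr₀ hnc _ hne ?_ ?_⟩
    · rw [Fintype.sum_sum_type]
      simp only [Sum.elim_inl, Sum.elim_inr, Pi.zero_apply, Finset.sum_const_zero, zero_add]
      rw [Fintype.sum_sum_type]
      simpa using hsumz
    · intro u
      match u with
      | Sum.inl a =>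
        simp only [Fintype.sum_sum_type, Sum.elim_inl, Sum.elim_inr, Pi.zero_apply,
          ite_self, Finset.sum_const_zero, zero_add, jadj_lr, if_true, add_zero]
        simp [hsumz]
      | Sum.inr (Sum.inl c) =>
        simp only [Fintype.sum_sum_type, Sum.elim_inl, Sum.elim_inr, Pi.zero_apply,
          ite_self, Finset.sum_const_zero, zero_add, add_zero, jadj_rr_lr, if_false]
        simp
      | Sum.inr (Sum.inr d) =>
        have hdz := congrFun hze d
        rw [adj_mulVec_ite] at hdz
        simp only [Fintype.sum_sum_type, Sum.elim_inl, Sum.elim_inr, Pi.zero_apply,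
          ite_self, Finset.sum_const_zero, zero_add, add_zero, jadj_rr_rr,
          jadj_rr_rl, if_false]
        simpa using hdz
end

section
/- Let G be an r-regular graph (r ≥ 3) with p vertices and adjacency eigenvalues r, λ₂, ..., λ_p. Then the adjacency spectrum of the second iterated line graph L²(G) consists of 4r−6; λ_i + 3r − 6 for i = 2,...,p; 2r−6 with multiplicity p(r−2)/2; and −2 with multiplicity pr(r−2)/2. -/
open SimpleGraph Matrix Finset

attribute [local instance] Fintype.ofFinite Classical.propDecidable

/-! Let `B` be the vertex–edge incidence matrix of an `r`-regular graph `H` with `p` vertices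
and `q` edges. Then `B Bᵀ = A(H) + r I` and `Bᵀ B = A(L(H)) + 2 I`, and `Bᵀ B` has the
eigenvalues of `B Bᵀ` together with `q - p` extra zeros. Hence the spectrum of `L(H)` is
`λ + r - 2` over the spectrum of `H` together with `-2` of multiplicity `q - p`. Row sums of
`Bᵀ B` show that `L(H)` is `(2r - 2)`-regular, so the same computation applies to `L(G)`, and
the handshake lemma turns the multiplicities into `p(r - 2)/2` and `pr(r - 2)/2`. -/

open Polynomial in
theorem Matrix.roots_charpoly_add_scalar {R n : Type*} [CommRing R] [IsDomain R] [Fintype n]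
    [DecidableEq n] (M : Matrix n n R) (μ : R) :
    (M + scalar n μ).charpoly.roots = M.charpoly.roots.map (· + μ) := by
  have h := M.charpoly_sub_scalar (-μ)
  rw [map_neg, sub_neg_eq_add, ← one_mul X, ← C_1] at h
  rw [h, roots_comp_C_mul_X_add_C _ _ _ isUnit_one]
  simp

open Polynomial in
theorem Matrix.roots_charpoly_mul_comm_of_le {R m n : Type*} [CommRing R] [IsDomain R]
    [Fintype m] [Fintype n] [DecidableEq m] [DecidableEq n] (A : Matrix m n R)
    (B : Matrix n m R) (hle : Fintype.card n ≤ Fintype.card m) :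
    (A * B).charpoly.roots =
      Multiset.replicate (Fintype.card m - Fintype.card n) 0 + (B * A).charpoly.roots := by
  rw [charpoly_mul_comm_of_le A B hle,
    roots_mul ((monic_X_pow _).mul (charpoly_monic _)).ne_zero, roots_X_pow,
    Multiset.nsmul_singleton]

namespace SimpleGraph

theorem lineG_adj {W : Type*} {H : SimpleGraph W} {e f : H.edgeSet} :
    (lineG H).Adj e f ↔ e ≠ f ∧ ∃ v, v ∈ (e : Sym2 W) ∧ v ∈ (f : Sym2 W) := by
  simp only [lineG, fromRel_adj, and_comm (a := _ ∈ (e : Sym2 W)), or_self]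

variable {W : Type*} [Fintype W]

theorem IsRegularOfDegree.two_mul_card_edgeSet {H : SimpleGraph W} [DecidableRel H.Adj]
    [Fintype H.edgeSet] {r : ℕ} (hreg : H.IsRegularOfDegree r) :
    2 * Fintype.card H.edgeSet = Fintype.card W * r := by
  have := H.sum_degrees_eq_twice_card_edges
  simp only [hreg.degree_eq, Finset.sum_const, Finset.card_univ, smul_eq_mul] at this
  rw [← edgeFinset_card]
  convert this.symm

theorem IsRegularOfDegree.card_edgeSet_sub_card {H : SimpleGraph W} [DecidableRel H.Adj]
    [Fintype H.edgeSet] {r : ℕ} (hreg : H.IsRegularOfDegree r) :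
    Fintype.card H.edgeSet - Fintype.card W = Fintype.card W * (r - 2) / 2 := by
  have := hreg.two_mul_card_edgeSet
  rw [Nat.mul_sub]
  omega

variable [DecidableEq W] (H : SimpleGraph W)

theorem incMat_apply (v : W) (e : H.edgeSet) :
    incMat H v e = if v ∈ (e : Sym2 W) then 1 else 0 := by
  unfold incMat
  congr

theorem incMat_apply_mul_self (v : W) (e : H.edgeSet) :
    incMat H v e * incMat H v e = incMat H v e := by
  rw [incMat_apply]
  split_ifs <;> norm_num

theorem sum_incMat_apply_edge (e : H.edgeSet) : ∑ v, incMat H v e = 2 := by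
  simp_rw [incMat_apply, ← Sym2.mem_toFinset, Finset.sum_boole, Finset.filter_mem_eq_inter,
    Finset.univ_inter, Sym2.card_toFinset_of_not_isDiag _ (H.not_isDiag_of_mem_edgeSet e.2)]
  norm_num

variable [Fintype H.edgeSet]

theorem sum_incMat_apply [DecidableRel H.Adj] (u : W) : ∑ e, incMat H u e = H.degree u := by
  calc ∑ e, incMat H u e = #{e : H.edgeSet | u ∈ (e : Sym2 W)} := by
        simp only [incMat_apply, Finset.sum_boole]
    _ = Fintype.card (H.incidenceSet u) := by
        rw [← Fintype.card_subtype]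
        exact congrArg _ (Fintype.card_congr
          (Equiv.subtypeSubtypeEquivSubtypeInter (· ∈ H.edgeSet) (u ∈ ·)))
    _ = H.degree u := by rw [card_incidenceSet_eq_degree]

theorem incMat_mul_transpose [DecidableRel H.Adj] :
    incMat H * (incMat H)ᵀ = H.adjMatrix ℝ + diagonal fun v => (H.degree v : ℝ) := by
  ext u w
  simp only [mul_apply, transpose_apply, Matrix.add_apply, diagonal_apply, adjMatrix_apply]
  rcases eq_or_ne u w with rfl | huw
  · simp [incMat_apply_mul_self, sum_incMat_apply]
  simp only [incMat_apply, ite_zero_mul_ite_zero, mul_one, Sym2.mem_and_mem_iff huw, huw,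
    if_false, add_zero]
  by_cases hadj : H.Adj u w
  · have hedge (e : H.edgeSet) : (e : Sym2 W) = s(u, w) ↔ e = ⟨s(u, w), hadj⟩ := by
      rw [Subtype.ext_iff]
    simp [hedge, hadj]
  · have hedge (e : H.edgeSet) : (e : Sym2 W) ≠ s(u, w) := fun he =>
      hadj (by simpa [he] using e.2)
    simp [hedge, hadj]

theorem incMat_transpose_mul [DecidableRel (lineG H).Adj] :
    (incMat H)ᵀ * incMat H = (lineG H).adjMatrix ℝ + scalar H.edgeSet 2 := by
  ext e f
  simp only [mul_apply, transpose_apply, Matrix.add_apply, scalar_apply, diagonal_apply,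
    adjMatrix_apply]
  rcases eq_or_ne e f with rfl | hef
  · simp [incMat_apply_mul_self, sum_incMat_apply_edge]
  simp only [incMat_apply, ite_zero_mul_ite_zero, mul_one, lineG_adj, hef, ne_eq,
    not_false_eq_true, true_and, if_false, add_zero]
  by_cases hshare : ∃ v, v ∈ (e : Sym2 W) ∧ v ∈ (f : Sym2 W)
  · obtain ⟨w, hwe, hwf⟩ := hshare
    have hcommon (v : W) : v ∈ (e : Sym2 W) ∧ v ∈ (f : Sym2 W) ↔ v = w :=
      ⟨fun ⟨hve, hvf⟩ => by_contra fun hvw =>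
          hef (Subtype.ext (Sym2.eq_of_ne_mem hvw hve hwe hvf hwf)),
        by rintro rfl; exact ⟨hwe, hwf⟩⟩
    simp [hcommon]
  · rw [if_neg hshare]
    exact Finset.sum_eq_zero fun v _ => if_neg fun hv => hshare ⟨v, hv⟩

variable {H} [DecidableRel H.Adj] {r : ℕ}

theorem isRegularOfDegree_lineG [DecidableRel (lineG H).Adj] (hreg : H.IsRegularOfDegree r) :
    (lineG H).IsRegularOfDegree (2 * r - 2) := by
  intro e
  have hdeg : ((lineG H).degree e : ℝ) + 2 = 2 * r :=
    calc ((lineG H).degree e : ℝ) + 2 = ∑ f, ((incMat H)ᵀ * incMat H) e f := by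
          rw [incMat_transpose_mul, ← mul_one ((lineG H).degree e : ℝ),
            ← adjMatrix_mulVec_const_apply]
          simp [mulVec, dotProduct, Finset.sum_add_distrib, diagonal_apply]
      _ = ∑ v, incMat H v e * ∑ f, incMat H v f := by
          simp only [mul_apply, transpose_apply, Finset.mul_sum]
          exact Finset.sum_comm
      _ = 2 * r := by
          simp only [sum_incMat_apply, hreg.degree_eq, ← Finset.sum_mul, sum_incMat_apply_edge]
  have : (lineG H).degree e + 2 = 2 * r := by exact_mod_cast hdeg
  omega

theorem IsRegularOfDegree.roots_charpoly_lineG [DecidableRel (lineG H).Adj]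
    (hreg : H.IsRegularOfDegree r) (hr : 2 ≤ r) :
    ((lineG H).adjMatrix ℝ).charpoly.roots =
      (H.adjMatrix ℝ).charpoly.roots.map (· + ((r : ℝ) - 2)) +
        Multiset.replicate (Fintype.card H.edgeSet - Fintype.card W) (-2) := by
  have hcard : Fintype.card W ≤ Fintype.card H.edgeSet := by
    have := hreg.two_mul_card_edgeSet
    nlinarith
  have hvertex : incMat H * (incMat H)ᵀ = H.adjMatrix ℝ + scalar W (r : ℝ) := by
    rw [incMat_mul_transpose, scalar_apply]
    simp only [hreg.degree_eq]
  have hroots := (incMat H)ᵀ.roots_charpoly_mul_comm_of_le (incMat H) hcard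
  rw [incMat_transpose_mul, hvertex, roots_charpoly_add_scalar,
    roots_charpoly_add_scalar] at hroots
  have := congrArg (Multiset.map (· - 2)) hroots
  simp only [Multiset.map_map, Function.comp_def, add_sub_cancel_right, Multiset.map_id'] at this
  rw [this, Multiset.map_add, Multiset.map_replicate, Multiset.map_map, add_comm]
  congr 1
  · exact Multiset.map_congr rfl fun x _ => by simp only [Function.comp_apply]; ring
  · norm_num

end SimpleGraph

/-- For an `r`-regular graph `G` (`r ≥ 3`) on `p` vertices with adjacency
spectrum `{r} ∪ μ`, the adjacency spectrum of `L²(G)` is `{4r-6} ∪ {λ+3r-6 : λ ∈ μ}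
∪ {(2r-6)^(p(r-2)/2)} ∪ {(-2)^(pr(r-2)/2)}`. -/
theorem stmt14 {V : Type*} [Fintype V] (G : SimpleGraph V) (p r : ℕ)
    (hp : Fintype.card V = p) (hreg : G.IsRegularOfDegree r) (hr : 3 ≤ r)
    (μ : Multiset ℝ)
    (hspec : (G.adjMatrix ℝ).charpoly.roots = (r : ℝ) ::ₘ μ) :
    ((lineG (lineG G)).adjMatrix ℝ).charpoly.roots =
      (4 * (r : ℝ) - 6) ::ₘ
        (μ.map (fun x => x + (3 * (r : ℝ) - 6)) +
          (Multiset.replicate (p * (r - 2) / 2) (2 * (r : ℝ) - 6) +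
            Multiset.replicate (p * r * (r - 2) / 2) (-2 : ℝ))) := by
  have hregL := isRegularOfDegree_lineG hreg
  have hcount : Fintype.card G.edgeSet * (2 * r - 2 - 2) = p * r * (r - 2) := by
    rw [← hp, ← hreg.two_mul_card_edgeSet, show 2 * r - 2 - 2 = 2 * (r - 2) by omega]
    ring
  rw [hregL.roots_charpoly_lineG (by omega), hreg.roots_charpoly_lineG (by omega), hspec,
    hregL.card_edgeSet_sub_card, hreg.card_edgeSet_sub_card, hcount, hp]
  push_cast [Nat.cast_sub (by omega : 2 ≤ 2 * r)]
  simp only [Multiset.map_add, Multiset.map_cons, Multiset.map_map, Multiset.map_replicate,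
    Function.comp_def, Multiset.cons_add, add_assoc]
  ring_nf
end
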